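/- For every piece a ∈ Σ, the first hitting time of a is an asynchronous stopping time. -/

import Mathlib

open MeasureTheory Filter
open scoped ENNReal NNReal

namespace HeapPaper

variable {S : Type}

/-- Commutation pairs of words, generating the trace congruence. -/
def CommRel (I : S → S → Prop) (w₁ w₂ : FreeMonoid S) : Prop :=
  ∃ a b : S, I a b ∧ w₁ = FreeMonoid.of a * FreeMonoid.of b ∧
    w₂ = FreeMonoid.of b * FreeMonoid.of a

/-- The congruence on the free monoid generated by the commutation of independent pieces. -/
def HeapCon (I : S → S → Prop) : Con (FreeMonoid S) := conGen (CommRel I)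

/-- The heap monoid `M(Σ, I)`:  the presented monoid `⟨Σ | ab = ba, (a,b) ∈ I⟩`. -/
def Heap (I : S → S → Prop) := (HeapCon I).Quotient

instance (I : S → S → Prop) : Monoid (Heap I) :=
  inferInstanceAs (Monoid (HeapCon I).Quotient)

/-- The unique additive extension to heaps of a function `φ` defined on pieces. -/
def addExt {A : Type} [AddCommMonoid A] {I : S → S → Prop} (φ : S → A) : Heap I → A :=
  fun x => Multiplicative.toAdd <|
    (Con.lift (HeapCon I) (FreeMonoid.lift fun a => Multiplicative.ofAdd (φ a))
      (Con.conGen_le.2 (by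
        rintro w₁ w₂ ⟨a, b, hab, rfl, rfl⟩
        exact (Con.ker_rel _).mpr (by simp [map_mul, mul_comm])))) x

/-- The length `|x|` of a heap: the common length of its representative words. -/
def len {I : S → S → Prop} (x : Heap I) : ℕ := addExt (fun _ => 1) x

/-- The number `|x|ₐ` of occurrences of the piece `a` in the heap `x`. -/
def occ {I : S → S → Prop} [DecidableEq S] (a : S) (x : Heap I) : ℕ :=
  addExt (fun b => if b = a then 1 else 0) x

/-- The additive extension `⟨φ, x⟩` of a real-valued cost function. -/
def pairing {I : S → S → Prop} (φ : S → ℝ) (x : Heap I) : ℝ := addExt φ x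

/-- The left-divisibility order on the heap monoid. -/
def hLe {I : S → S → Prop} (x y : Heap I) : Prop := ∃ z : Heap I, y = x * z

/-- Cliques: finite sets of pairwise independent pieces. -/
def Cl (I : S → S → Prop) := {s : Finset S // ∀ a ∈ s, ∀ b ∈ s, a ≠ b → I a b}

/-- The empty clique. -/
def emptyCl (I : S → S → Prop) : Cl I := ⟨∅, by simp⟩

/-- The heap associated with a clique (product of its pieces, in any order). -/
def Cl.heap {I : S → S → Prop} (γ : Cl I) : Heap I :=
  γ.1.noncommProd (fun a => (HeapCon I).mk' (FreeMonoid.of a)) (by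
    intro a ha b hb hab
    have hI : I a b := γ.2 a ha b hb hab
    show (HeapCon I).mk' (FreeMonoid.of a) * (HeapCon I).mk' (FreeMonoid.of b)
        = (HeapCon I).mk' (FreeMonoid.of b) * (HeapCon I).mk' (FreeMonoid.of a)
    rw [← map_mul, ← map_mul]
    exact (Con.eq _).mpr (ConGen.Rel.of _ _ ⟨a, b, hI, rfl, rfl⟩))

/-- The Cartier–Foata move relation `γ → γ'` between cliques. -/
def Move {I : S → S → Prop} (γ γ' : Cl I) : Prop :=
  ∀ b ∈ γ'.1, ∃ a ∈ γ.1, ¬ I a b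

/-- The boundary `∂M`: infinite admissible sequences of nonempty cliques. -/
def Bnd (I : S → S → Prop) :=
  {ξ : ℕ → Cl I // (∀ n, (ξ n).1.Nonempty) ∧ ∀ n, Move (ξ n) (ξ (n + 1))}

/-- `M̄ = M ∪ ∂M`. -/
def MB (I : S → S → Prop) := Heap I ⊕ Bnd I

/-- Partial products of a sequence of cliques. -/
def ppSeq {I : S → S → Prop} (c : ℕ → Cl I) (n : ℕ) : Heap I :=
  ((List.range n).map fun i => (c i).heap).prod

/-- `c` is the Cartier–Foata decomposition of the heap `x`, padded with empty cliques:
`c` is admissible, eventually empty, with partial products eventually equal to `x`. -/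
def CFprop (I : S → S → Prop) (c : ℕ → Cl I) (x : Heap I) : Prop :=
  (∀ n, Move (c n) (c (n + 1))) ∧
    ∃ N, ∀ n, N ≤ n → ppSeq c n = x ∧ c n = emptyCl I

/-- The (padded) Cartier–Foata decomposition of a heap. -/
noncomputable def cf (I : S → S → Prop) (x : Heap I) : ℕ → Cl I :=
  letI := Classical.propDecidable (∃ c, CFprop I c x)
  if h : ∃ c, CFprop I c x then h.choose else fun _ => emptyCl I

/-- The Cartier–Foata sequence of an element of `M̄`. -/
noncomputable def seqOf {I : S → S → Prop} : MB I → ℕ → Cl I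
  | .inl x => cf I x
  | .inr ξ => ξ.1

/-- Partial products of the Cartier–Foata sequence of an element of `M̄`. -/
noncomputable def pp {I : S → S → Prop} (ζ : MB I) (n : ℕ) : Heap I :=
  ppSeq (seqOf ζ) n

/-- The order on `M̄`: `ξ ≤ ξ'` iff `γ₁⋯γₙ ≤ γ'₁⋯γ'ₙ` in `M` for all `n`. -/
noncomputable def mLe {I : S → S → Prop} (ζ ζ' : MB I) : Prop :=
  ∀ n : ℕ, hLe (pp ζ n) (pp ζ' n)

/-- The elementary cylinder `↑x ⊆ ∂M` of base `x ∈ M`. -/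
noncomputable def cyl {I : S → S → Prop} (x : Heap I) : Set (Bnd I) :=
  {ξ : Bnd I | mLe (.inl x) (.inr ξ)}

/-- The σ-algebra `𝔉` on `∂M` generated by the elementary cylinders. -/
noncomputable def Fsa (I : S → S → Prop) : MeasurableSpace (Bnd I) :=
  MeasurableSpace.generateFrom {A : Set (Bnd I) | ∃ x : Heap I, A = cyl x}

noncomputable instance (I : S → S → Prop) : MeasurableSpace (Bnd I) := Fsa I

/-- `ζ` is the least upper bound in `M̄` of the nondecreasing sequence `(x·γ₁⋯γₙ)ₙ`,
where `(γₙ)` is the Cartier–Foata sequence of `ξ`; this characterizes `x·ξ`. -/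
noncomputable def IsConc {I : S → S → Prop} (x : Heap I) (ξ : Bnd I) (ζ : MB I) : Prop :=
  (∀ n : ℕ, mLe (.inl (x * pp (.inr ξ) n)) ζ) ∧
    ∀ η : MB I, (∀ n : ℕ, mLe (.inl (x * pp (.inr ξ) n)) η) → mLe ζ η

/-- The concatenation `x·ξ ∈ ∂M` of a heap `x` and an infinite heap `ξ`. -/
noncomputable def concB {I : S → S → Prop} (x : Heap I) (ξ : Bnd I) : Bnd I :=
  letI := Classical.propDecidable (∃ ζ : Bnd I, IsConc x ξ (.inr ζ))
  if h : ∃ ζ : Bnd I, IsConc x ξ (.inr ζ) then h.choose else ξ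

/-- The difference `ξ − x`: the unique `ζ ∈ ∂M` with `x·ζ = ξ` (junk value if none exists). -/
noncomputable def subB {I : S → S → Prop} (ξ : Bnd I) (x : Heap I) : Bnd I :=
  letI := Classical.propDecidable (∃ ζ : Bnd I, concB x ζ = ξ)
  if h : ∃ ζ : Bnd I, concB x ζ = ξ then h.choose else ξ

/-- Asynchronous stopping time. -/
noncomputable def IsAST {I : S → S → Prop} (V : Bnd I → MB I) : Prop :=
  (∀ ξ : Bnd I, mLe (V ξ) (.inr ξ)) ∧
    ∀ (ξ ξ' : Bnd I) (x : Heap I), V ξ = .inl x → mLe (.inl x) (.inr ξ') → V ξ' = V ξ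

/-- The shift operator `θ_V` associated with an AST `V` (junk: identity outside its domain). -/
noncomputable def shiftV {I : S → S → Prop} (V : Bnd I → MB I) (ξ : Bnd I) : Bnd I :=
  match V ξ with
  | .inl x => subB ξ x
  | .inr _ => ξ

/-- The σ-algebra `𝔉_V` generated by the cylinders of the finite values of `V`. -/
noncomputable def astSA {I : S → S → Prop} (V : Bnd I → MB I) : MeasurableSpace (Bnd I) :=
  MeasurableSpace.generateFrom
    {A : Set (Bnd I) | ∃ x : Heap I, (∃ ξ : Bnd I, V ξ = .inl x) ∧ A = cyl x}

/-- The iterated sequence `(Vₙ)ₙ` of an AST `V`:  `V₀ = 0` and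
`V_{n+1}(ξ) = Vₙ(ξ)·V(ξ − Vₙ(ξ))` if `Vₙ(ξ) ∈ M`, `V_{n+1}(ξ) = ξ` otherwise. -/
noncomputable def iter {I : S → S → Prop} (V : Bnd I → MB I) : ℕ → Bnd I → MB I
  | 0, _ => .inl 1
  | n + 1, ξ =>
    match iter V n ξ with
    | .inl x =>
      match V (subB ξ x) with
      | .inl y => .inl (x * y)
      | .inr ζ => .inr (concB x ζ)
    | .inr _ => .inr ξ

/-- The increment `Δ_{n+1} = V ∘ θ_{Vₙ}` (junk value outside the domain of `θ_{Vₙ}`). -/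
noncomputable def Delta {I : S → S → Prop} (V : Bnd I → MB I) (n : ℕ) (ξ : Bnd I) : MB I :=
  match iter V n ξ with
  | .inl x => V (subB ξ x)
  | .inr _ => .inr ξ

/-- The length of an element of `M̄`, with `|ξ| = ∞` for `ξ ∈ ∂M`. -/
noncomputable def lenE {I : S → S → Prop} : MB I → ℝ≥0∞
  | .inl x => (len x : ℝ≥0∞)
  | .inr _ => ⊤

/-- `E|V| < ∞`. -/
noncomputable def EVfin {I : S → S → Prop} (P : Measure (Bnd I)) (V : Bnd I → MB I) : Prop :=
  ∫⁻ ξ, lenE (V ξ) ∂P < ⊤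

/-- The AST `V` is exhaustive: it is `ℙ`-a.s. finite and `ℙ`-a.s. `ξ = ⋁ₙ Vₙ(ξ)`
(`ξ` is the least upper bound of its iterates). -/
noncomputable def Exhaustive {I : S → S → Prop} (P : Measure (Bnd I)) (V : Bnd I → MB I) : Prop :=
  (∀ᵐ ξ ∂P, ∃ x : Heap I, V ξ = .inl x) ∧
    ∀ᵐ ξ ∂P, (∀ n : ℕ, mLe (iter V n ξ) (.inr ξ)) ∧
      ∀ ζ : MB I, (∀ n : ℕ, mLe (iter V n ξ) ζ) → mLe (.inr ξ) ζ

/-- `ℙ` is a Bernoulli measure: a probability measure on `(∂M, 𝔉)` that is multiplicative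
and positive on elementary cylinders. -/
noncomputable def IsBernoulli {I : S → S → Prop} (P : Measure (Bnd I)) : Prop :=
  IsProbabilityMeasure P ∧
    (∀ x y : Heap I, P (cyl (x * y)) = P (cyl x) * P (cyl y)) ∧
    ∀ x : Heap I, 0 < P (cyl x)

/-- `ζ` is the greatest lower bound, within the complete lattice `L(ξ)`, of the set
`Hₐ(ξ)` of finite subheaps of `ξ` containing an occurrence of `a`:  this characterizes
the first hitting time of `a`. -/
noncomputable def IsHit {I : S → S → Prop} [DecidableEq S] (a : S) (ξ : Bnd I) (ζ : MB I) :
    Prop :=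
  mLe ζ (.inr ξ) ∧
    (∀ x : Heap I, mLe (.inl x) (.inr ξ) → 0 < occ a x → mLe ζ (.inl x)) ∧
    ∀ η : MB I, mLe η (.inr ξ) →
      (∀ x : Heap I, mLe (.inl x) (.inr ξ) → 0 < occ a x → mLe η (.inl x)) → mLe η ζ

/-- The first hitting time of the piece `a`. -/
noncomputable def hit {I : S → S → Prop} [DecidableEq S] (a : S) (ξ : Bnd I) : MB I :=
  letI := Classical.propDecidable (∃ ζ : MB I, IsHit a ξ ζ)
  if h : ∃ ζ : MB I, IsHit a ξ ζ then h.choose else .inr ξ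

/-- A maximal clique: a maximal element of `(𝒞, ≤)`. -/
noncomputable def IsMaxCl {I : S → S → Prop} (γ : Cl I) : Prop :=
  ∀ δ : Cl I, hLe γ.heap δ.heap → δ.heap = γ.heap

/-- The AST cutting an infinite heap at the first occurrence of a maximal clique. -/
noncomputable def Vmax {I : S → S → Prop} (ξ : Bnd I) : MB I :=
  letI := Classical.propDecidable
  if h : ∃ k : ℕ, IsMaxCl (ξ.1 k) then .inl (ppSeq ξ.1 (Nat.find h + 1)) else .inr ξ

/-- The ergodic mean `⟨φ, x⟩ / |x|` (junk value `0` on infinite heaps). -/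
noncomputable def ratioC {I : S → S → Prop} (φ : S → ℝ) : MB I → ℝ
  | .inl x => pairing φ x / (len x : ℝ)
  | .inr _ => 0

/-- The ratio `φ(x)/|x|` for `φ` defined on heaps (junk value `0` on infinite heaps). -/
noncomputable def ratioH {I : S → S → Prop} (φ : Heap I → ℝ) : MB I → ℝ
  | .inl x => φ x / (len x : ℝ)
  | .inr _ => 0

/-- The set `ℭ` of nonempty cliques. -/
def NCl (I : S → S → Prop) := {γ : Cl I // γ.1.Nonempty}

instance [Fintype S] (I : S → S → Prop) : Finite (Cl I) :=
  inferInstanceAs (Finite {s : Finset S // ∀ a ∈ s, ∀ b ∈ s, a ≠ b → I a b})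

instance [Fintype S] (I : S → S → Prop) : Finite (NCl I) :=
  inferInstanceAs (Finite {γ : Cl I // γ.1.Nonempty})

/-- The valuation `f(x) = ℙ(↑x)` associated with `ℙ`. -/
noncomputable def fval {I : S → S → Prop} (P : Measure (Bnd I)) (x : Heap I) : ℝ :=
  (P (cyl x)).toReal

open Classical in
/-- The Möbius transform `h` of the valuation `f` associated with `ℙ`. -/
noncomputable def mobius {I : S → S → Prop} (P : Measure (Bnd I)) (γ : Cl I) : ℝ :=
  ∑ᶠ γ' : Cl I,
    if hLe γ.heap γ'.heap then (-1 : ℝ) ^ (γ'.1.card - γ.1.card) * fval P γ'.heap else 0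

open Classical in
/-- The normalization `g(γ) = Σ_{γ'∈ℭ, γ→γ'} h(γ')`. -/
noncomputable def gnorm {I : S → S → Prop} (P : Measure (Bnd I)) (γ : Cl I) : ℝ :=
  ∑ᶠ γ' : Cl I, if γ'.1.Nonempty ∧ Move γ γ' then mobius P γ' else 0

open Classical in
/-- The transition matrix of the Markov chain of cliques. -/
noncomputable def Pmat {I : S → S → Prop} (P : Measure (Bnd I)) (γ γ' : Cl I) : ℝ :=
  if Move γ γ' then mobius P γ' / gnorm P γ else 0

/-- `π` is a stationary probability distribution, carried by the nonempty cliques, of the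
Markov chain of cliques. -/
noncomputable def IsStationary {I : S → S → Prop} (P : Measure (Bnd I)) (π : Cl I → ℝ) :
    Prop :=
  (∀ γ : Cl I, 0 ≤ π γ) ∧ (π (emptyCl I) = 0) ∧ (∑ᶠ γ : Cl I, π γ = 1) ∧
    ∀ γ' : Cl I, π γ' = ∑ᶠ γ : Cl I, π γ * Pmat P γ γ'

open Classical in
/-- The nonnegative matrix `B` on `ℭ×ℭ`: `B_{γ,γ'} = f(γ')` if `γ → γ'`, else `0`. -/
noncomputable def Bmat {I : S → S → Prop} (P : Measure (Bnd I)) :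
    Matrix (NCl I) (NCl I) ℝ :=
  fun γ γ' => if Move γ.1 γ'.1 then fval P γ'.1.heap else 0

/-- The spectral radius of `B` (as a complex matrix). -/
noncomputable def specRadB [Fintype S] {I : S → S → Prop} (P : Measure (Bnd I)) : ℝ≥0∞ :=
  letI : Fintype (NCl I) := Fintype.ofFinite _
  letI : DecidableEq (NCl I) := Classical.decEq _
  spectralRadius ℂ ((Bmat P).map (algebraMap ℝ ℂ))

/-- The height `τ(x)` of a heap: the number of cliques in its Cartier–Foata decomposition. -/
noncomputable def height {I : S → S → Prop} (x : Heap I) : ℕ :=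
  sInf {N : ℕ | ∀ n, N ≤ n → cf I x n = emptyCl I}

/-- The ratio `|x|/τ(x)` (junk value `0` on infinite heaps). -/
noncomputable def speedRatio {I : S → S → Prop} : MB I → ℝ
  | .inl x => (len x : ℝ) / (height x : ℝ)
  | .inr _ => 0

/-- `ψ ∘ θ_V` extended by `0` outside the domain of `θ_V`. -/
noncomputable def extShift {I : S → S → Prop} (V : Bnd I → MB I) (ψ : Bnd I → ℝ)
    (η : Bnd I) : ℝ :=
  match V η with
  | .inl _ => ψ (shiftV V η)
  | .inr _ => 0


/-!
A finite heap `u` in which the piece `a` occurs has a least prefix containing `a`. It is built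
by peeling off minimal pieces, using a one-piece Levi lemma: a minimal piece `c` of `z * s`
is either minimal in `z`, or absent from `z`, commuting with all of `z`, and minimal in `s`
(a left-to-right scan of any representative word detects which). This least prefix `x` is
intrinsic: it is also the least `a`-prefix of every heap that `x` divides.

The finite heaps below `ξ ∈ ∂M` are the divisors of the partial products of its Cartier–Foata
sequence, by monotonicity of the Cartier–Foata decomposition. Hence a finite value `Vₐ(ξ) = x`
is the least `a`-prefix of such a partial product, and for every `ξ'` above `x` it is then
the least `a`-prefix of a partial product of `ξ'` as well, so that `Vₐ(ξ') = x`.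
-/

open Relation (SymmGen)

variable {I : S → S → Prop}

theorem _root_.Commute.dvd_mul_of_dvd {M : Type*} [Monoid M] {x y z : M} (h : Commute y x)
    (hx : x ∣ z) : x ∣ y * z := by
  obtain ⟨t, rfl⟩ := hx
  exact ⟨y * t, by rw [← mul_assoc, h.eq, mul_assoc]⟩

section HeapMonoid

namespace Heap

variable (I) in
def of (c : S) : Heap I := (HeapCon I).mk' (FreeMonoid.of c)

@[elab_as_elim]
theorem induction_on {P : Heap I → Prop} (x : Heap I) (one : P 1)
    (of_mul : ∀ c x, P x → P (of I c * x)) : P x := by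
  obtain ⟨w, rfl⟩ := (HeapCon I).mk'_surjective x
  induction w using FreeMonoid.inductionOn' with
  | one => exact one
  | of_mul c w ih => rw [map_mul]; exact of_mul c _ ih

theorem commute_of {c d : S} (h : SymmGen I c d) : Commute (of I c) (of I d) := by
  rcases h with h | h
  · exact (Con.eq _).mpr (ConGen.Rel.of _ _ ⟨c, d, h, rfl, rfl⟩)
  · exact ((Con.eq _).mpr (ConGen.Rel.of _ _ ⟨d, c, h, rfl, rfl⟩)).symm

end Heap

section AddExt

variable {A : Type} [AddCommMonoid A]

theorem addExt_one (φ : S → A) : addExt (I := I) φ 1 = 0 :=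
  congrArg Multiplicative.toAdd (map_one _)

theorem addExt_mul (φ : S → A) (x y : Heap I) :
    addExt φ (x * y) = addExt φ x + addExt φ y :=
  congrArg Multiplicative.toAdd (map_mul _ x y)

theorem addExt_of (φ : S → A) (c : S) : addExt (I := I) φ (Heap.of I c) = φ c := rfl

end AddExt

theorem len_one : len (1 : Heap I) = 0 := addExt_one _

theorem len_mul (x y : Heap I) : len (x * y) = len x + len y := addExt_mul _ x y

theorem len_of (c : S) : len (Heap.of I c) = 1 := addExt_of _ c

theorem eq_one_of_len_eq_zero {x : Heap I} : len x = 0 → x = 1 := by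
  induction x using Heap.induction_on with
  | one => exact fun _ => rfl
  | of_mul c x _ => rw [len_mul, len_of]; omega

theorem heapCon_erase [DecidableEq S] (c : S) {w w' : FreeMonoid S} (h : HeapCon I w w') :
    (c ∈ w.toList ↔ c ∈ w'.toList) ∧
      HeapCon I (.ofList (w.toList.erase c)) (.ofList (w'.toList.erase c)) := by
  induction h with
  | of _ _ hab =>
    obtain ⟨a, b, hab, rfl, rfl⟩ := hab
    refine ⟨by simp [or_comm], ?_⟩
    change HeapCon I (.ofList ([a, b].erase c)) (.ofList ([b, a].erase c))
    by_cases hc : c = a ∨ c = b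
    · have : [a, b].erase c = [b, a].erase c := by
        by_cases hba : b = a
        · rw [hba]
        · rcases hc with rfl | rfl <;> simp [hba, Ne.symm hba]
      rw [this]
      exact (HeapCon I).refl _
    · rw [List.erase_of_not_mem (by simpa using hc),
        List.erase_of_not_mem (by simpa [or_comm] using hc)]
      exact ConGen.Rel.of _ _ ⟨a, b, hab, rfl, rfl⟩
  | refl => exact ⟨Iff.rfl, (HeapCon I).refl _⟩
  | symm _ ih => exact ⟨ih.1.symm, (HeapCon I).symm ih.2⟩
  | trans _ _ ih ih' => exact ⟨ih.1.trans ih'.1, (HeapCon I).trans ih.2 ih'.2⟩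
  | @mul w₁ w₂ v₁ v₂ hw hv ihw ihv =>
    refine ⟨by simp [ihw.1, ihv.1], ?_⟩
    simp only [FreeMonoid.toList_mul]
    by_cases hc : c ∈ w₁.toList
    · rw [List.erase_append_left _ hc, List.erase_append_left _ (ihw.1.mp hc)]
      exact (HeapCon I).mul ihw.2 hv
    · rw [List.erase_append_right _ hc, List.erase_append_right _ (mt ihw.1.mpr hc)]
      exact (HeapCon I).mul hw ihv.2

theorem Heap.of_mul_left_cancel {c : S} {y z : Heap I} (h : of I c * y = of I c * z) : y = z := by
  classical
  obtain ⟨u, rfl⟩ := (HeapCon I).mk'_surjective y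
  obtain ⟨v, rfl⟩ := (HeapCon I).mk'_surjective z
  exact (Con.eq _).mpr (by simpa using (heapCon_erase c ((Con.eq _).mp h)).2)

instance : IsLeftCancelMul (Heap I) where
  mul_left_cancel x y z := by
    induction x using Heap.induction_on with
    | one => simp only [one_mul]; exact id
    | of_mul c x ih =>
      simp only [mul_assoc] at ih ⊢
      exact fun h => ih (Heap.of_mul_left_cancel h)

theorem len_le_len_of_dvd {x y : Heap I} (h : x ∣ y) : len x ≤ len y := by
  obtain ⟨u, rfl⟩ := h
  rw [len_mul]
  omega

theorem Heap.dvd_antisymm {x y : Heap I} (h : x ∣ y) (h' : y ∣ x) : x = y := by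
  obtain ⟨u, rfl⟩ := h
  obtain ⟨v, hv⟩ := h'
  have := congrArg len hv
  rw [mul_assoc, len_mul, len_mul] at this
  rw [eq_one_of_len_eq_zero (I := I) (by omega : len u = 0), mul_one]

theorem Heap.not_of_dvd_one (c : S) : ¬ of I c ∣ 1 := fun h => by
  simpa [len_of, len_one] using len_le_len_of_dvd h

/-- The state of a left-to-right scan of a word in search of a piece `c`: `found` records whether
`c` has occurred, `clean` whether every piece read before its first occurrence commutes
with `c`. -/
@[ext]
structure Scan where
  found : Prop
  clean : Prop

instance : One Scan := ⟨⟨False, True⟩⟩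

instance : Mul Scan := ⟨fun x y => ⟨x.found ∨ y.found, x.clean ∧ (x.found ∨ y.clean)⟩⟩

theorem Scan.found_mul (x y : Scan) : (x * y).found = (x.found ∨ y.found) := rfl

theorem Scan.clean_mul (x y : Scan) : (x * y).clean = (x.clean ∧ (x.found ∨ y.clean)) := rfl

instance : Monoid Scan where
  mul_assoc _ _ _ := Scan.ext (propext (by simp only [Scan.found_mul]; tauto))
    (propext (by simp only [Scan.found_mul, Scan.clean_mul]; tauto))
  one_mul _ := Scan.ext (false_or _) (propext (by simp only [Scan.clean_mul]; tauto))
  mul_one _ := Scan.ext (or_false _) (propext (by simp only [Scan.clean_mul]; tauto))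

variable (I) in
def scan (c : S) : Heap I →* Scan :=
  (HeapCon I).lift (FreeMonoid.lift fun d => ⟨d = c, d = c ∨ SymmGen I c d⟩) <|
    Con.conGen_le.2 <| by
      rintro _ _ ⟨a, b, hab, rfl, rfl⟩
      refine (Con.ker_rel _).mpr (Scan.ext ?_ ?_) <;>
        simp only [map_mul, FreeMonoid.lift_eval_of, Scan.found_mul, Scan.clean_mul]
      · exact propext or_comm
      by_cases ha : a = c <;> by_cases hb : b = c <;> subst_vars <;>
        simp_all [SymmGen, and_comm]

theorem scan_of_mul (c d : S) (x : Heap I) :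
    scan I c (Heap.of I d * x) = ⟨d = c, d = c ∨ SymmGen I c d⟩ * scan I c x :=
  map_mul _ _ _

section Occurrences

variable [DecidableEq S]

theorem occ_one (a : S) : occ a (1 : Heap I) = 0 := addExt_one _

theorem occ_mul (a : S) (x y : Heap I) : occ a (x * y) = occ a x + occ a y := addExt_mul _ x y

theorem occ_of (a c : S) : occ a (Heap.of I c) = if c = a then 1 else 0 := addExt_of _ c

theorem occ_le_occ_of_dvd (a : S) {x y : Heap I} (h : x ∣ y) : occ a x ≤ occ a y := by
  obtain ⟨u, rfl⟩ := h
  rw [occ_mul]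
  omega

theorem Heap.commute_of_left {c : S} {x : Heap I} (h : ∀ d, 0 < occ d x → SymmGen I c d) :
    Commute (of I c) x := by
  induction x using Heap.induction_on with
  | one => exact Commute.one_right _
  | of_mul d x ih =>
    simp only [occ_mul, occ_of] at h
    exact (commute_of (h d (by simp))).mul_right (ih fun e he => h e (by omega))

theorem scan_found_iff (c : S) (x : Heap I) : (scan I c x).found ↔ 0 < occ c x := by
  induction x using Heap.induction_on with
  | one => rw [map_one, occ_one]; exact ⟨False.elim, (lt_irrefl 0).elim⟩
  | of_mul d x ih =>
    rw [scan_of_mul, Scan.found_mul, occ_mul, occ_of, ih]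
    by_cases hd : d = c <;> simp [hd]

theorem of_dvd_iff_scan (c : S) (x : Heap I) :
    Heap.of I c ∣ x ↔ (scan I c x).found ∧ (scan I c x).clean := by
  refine ⟨?_, fun h => ?_⟩
  · rintro ⟨t, rfl⟩
    simp [scan_of_mul, Scan.found_mul, Scan.clean_mul]
  induction x using Heap.induction_on with
  | one => exact h.1.elim
  | of_mul d x ih =>
    simp only [scan_of_mul, Scan.found_mul, Scan.clean_mul] at h
    by_cases hd : d = c
    · subst hd; exact dvd_mul_right _ _
    simp only [hd, false_or] at h
    obtain ⟨t, rfl⟩ := ih ⟨h.1, h.2.2⟩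
    rw [← mul_assoc, ← (Heap.commute_of h.2.1).eq, mul_assoc]
    exact dvd_mul_right _ _

theorem symmGen_of_scan {c : S} {x : Heap I} (hf : ¬ (scan I c x).found)
    (hc : (scan I c x).clean) (d : S) (hd : 0 < occ d x) : SymmGen I c d := by
  induction x using Heap.induction_on with
  | one => simp [occ_one] at hd
  | of_mul e x ih =>
    simp only [scan_of_mul, Scan.found_mul, Scan.clean_mul, not_or] at hf hc
    simp only [hf.1, false_or] at hc
    rw [occ_mul, occ_of] at hd
    by_cases hde : e = d
    · exact hde ▸ hc.1
    · exact ih hf.2 hc.2 (by simpa [hde] using hd)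

theorem of_dvd_mul_cases {c : S} {x y : Heap I} (h : Heap.of I c ∣ x * y) :
    Heap.of I c ∣ x ∨
      occ c x = 0 ∧ (∀ d, 0 < occ d x → SymmGen I c d) ∧ Heap.of I c ∣ y := by
  rw [of_dvd_iff_scan, map_mul, Scan.found_mul, Scan.clean_mul] at h
  by_cases hx : (scan I c x).found
  · exact .inl ((of_dvd_iff_scan c x).mpr ⟨hx, h.2.1⟩)
  · simp only [hx, false_or] at h
    refine .inr ⟨?_, symmGen_of_scan hx h.2.1, (of_dvd_iff_scan c y).mpr ⟨h.1, h.2.2⟩⟩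
    rwa [scan_found_iff, Nat.pos_iff_ne_zero, not_not] at hx

theorem of_dvd_of_dvd_of_occ_pos {c : S} {z u : Heap I} (hc : Heap.of I c ∣ u) (hz : z ∣ u)
    (hzc : 0 < occ c z) : Heap.of I c ∣ z := by
  obtain ⟨s, rfl⟩ := hz
  exact (of_dvd_mul_cases hc).resolve_right fun h => by omega

theorem dvd_of_dvd_of_mul_of_not_dvd {c : S} {z u : Heap I} (h : z ∣ Heap.of I c * u)
    (hz : ¬ Heap.of I c ∣ z) : (∀ d, 0 < occ d z → SymmGen I c d) ∧ z ∣ u := by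
  obtain ⟨s, hs⟩ := h
  obtain h | ⟨-, hind, t, rfl⟩ := of_dvd_mul_cases (hs ▸ dvd_mul_right (Heap.of I c) u)
  · exact absurd h hz
  refine ⟨hind, t, mul_left_cancel (a := Heap.of I c) ?_⟩
  rw [hs, ← mul_assoc, ← mul_assoc, (Heap.commute_of_left hind).eq]

theorem dvd_of_dvd_prod_mul {z u : Heap I} {l : List S} (h : z ∣ (l.map (Heap.of I)).prod * u)
    (hl : ∀ c ∈ l, ¬ Heap.of I c ∣ z) : (∀ c ∈ l, ∀ d, 0 < occ d z → SymmGen I c d) ∧ z ∣ u := by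
  induction l with
  | nil => simpa using h
  | cons c l ih =>
    rw [List.map_cons, List.prod_cons, mul_assoc] at h
    obtain ⟨hc, h⟩ := dvd_of_dvd_of_mul_of_not_dvd h (hl c List.mem_cons_self)
    obtain ⟨hl', h⟩ := ih h fun d hd => hl d (List.mem_cons_of_mem c hd)
    exact ⟨List.forall_mem_cons.mpr ⟨hc, hl'⟩, h⟩

def IsFirstHit (a : S) (u x : Heap I) : Prop :=
  x ∣ u ∧ 0 < occ a x ∧ ∀ z, z ∣ u → 0 < occ a z → x ∣ z

/-- Peel off a minimal piece `c` of `c * u`: the first hit of `a` there is the one in `u`,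
preceded by `c` unless `c` commutes with all of it. -/
theorem exists_isFirstHit {a : S} {u : Heap I} (hu : 0 < occ a u) : ∃ x, IsFirstHit a u x := by
  induction u using Heap.induction_on with
  | one => simp [occ_one] at hu
  | of_mul c u ih =>
    by_cases hca : c = a
    · subst hca
      exact ⟨Heap.of I c, dvd_mul_right _ _, by simp [occ_of],
        fun z hz hzc => of_dvd_of_dvd_of_occ_pos (dvd_mul_right _ _) hz hzc⟩
    obtain ⟨x₁, hx₁u, hx₁a, hx₁min⟩ := ih (by simpa [occ_mul, occ_of, hca] using hu)
    have below : ∀ z, z ∣ Heap.of I c * u → 0 < occ a z →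
        (∃ z₁, z = Heap.of I c * z₁ ∧ x₁ ∣ z₁) ∨
          (∀ d, 0 < occ d z → SymmGen I c d) ∧ x₁ ∣ z := by
      intro z hz hza
      by_cases hcz : Heap.of I c ∣ z
      · obtain ⟨z₁, rfl⟩ := hcz
        obtain ⟨s, hs⟩ := hz
        refine .inl ⟨z₁, rfl, hx₁min z₁ ⟨s, mul_left_cancel (hs.trans (mul_assoc _ _ _))⟩ ?_⟩
        simpa [occ_mul, occ_of, hca] using hza
      · obtain ⟨hind, hzu⟩ := dvd_of_dvd_of_mul_of_not_dvd hz hcz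
        exact .inr ⟨hind, hx₁min z hzu hza⟩
    by_cases hcomm : ∀ d, 0 < occ d x₁ → SymmGen I c d
    · have hc := Heap.commute_of_left hcomm
      refine ⟨x₁, hc.dvd_mul_of_dvd hx₁u, hx₁a, fun z hz hza => ?_⟩
      obtain ⟨z₁, rfl, h⟩ | ⟨-, h⟩ := below z hz hza
      exacts [hc.dvd_mul_of_dvd h, h]
    · refine ⟨Heap.of I c * x₁, mul_dvd_mul_left _ hx₁u, by simp [occ_mul, hx₁a],
        fun z hz hza => ?_⟩
      obtain ⟨z₁, rfl, h⟩ | ⟨hind, h⟩ := below z hz hza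
      · exact mul_dvd_mul_left _ h
      · exact absurd (fun d hd => hind d (hd.trans_le (occ_le_occ_of_dvd d h))) hcomm

theorem IsFirstHit.of_dvd {a : S} {u v x : Heap I} (h : IsFirstHit a u x) (hv : x ∣ v) :
    IsFirstHit a v x := by
  obtain ⟨hxu, hxa, hmin⟩ := h
  obtain ⟨y, hyv, hya, hymin⟩ := exists_isFirstHit (hxa.trans_le (occ_le_occ_of_dvd a hv))
  have hyx := hymin x hv hxa
  exact ⟨hv, hxa, fun z hz hza => (hmin y (hyx.trans hxu) hya).trans (hymin z hz hza)⟩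

end Occurrences

theorem Heap.of_dvd_of_iff {c d : S} : of I c ∣ of I d ↔ c = d := by
  classical
  refine ⟨fun h => ?_, fun h => h ▸ dvd_rfl⟩
  have := occ_le_occ_of_dvd c h
  rw [occ_of, occ_of, if_pos rfl] at this
  split_ifs at this with hdc
  exacts [hdc.symm, absurd this (by omega)]

end HeapMonoid

section Cliques

theorem noncommProd_of_eq_prod (s : Finset S) (comm) :
    s.noncommProd (Heap.of I) comm = (s.toList.map (Heap.of I)).prod := by
  classical
  rw [← Finset.noncommProd_toFinset s.toList _ ?_ s.nodup_toList]
  exact Finset.noncommProd_congr s.toList_toFinset.symm (fun _ _ => rfl) _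

theorem Cl.heap_eq_prod (γ : Cl I) : γ.heap = (γ.1.toList.map (Heap.of I)).prod :=
  noncommProd_of_eq_prod γ.1 _

theorem Cl.heap_eq_heap_mul_prod [DecidableEq S] {γ δ : Cl I} (h : γ.1 ⊆ δ.1) :
    δ.heap = γ.heap * ((δ.1 \ γ.1).toList.map (Heap.of I)).prod := by
  calc δ.heap = (γ.1 ∪ (δ.1 \ γ.1)).noncommProd (Heap.of I) _ :=
        Finset.noncommProd_congr (Finset.union_sdiff_of_subset h).symm (fun _ _ => rfl) _
    _ = γ.heap * (δ.1 \ γ.1).noncommProd (Heap.of I) _ :=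
        Finset.noncommProd_union_of_disjoint Finset.disjoint_sdiff _ _
    _ = _ := by rw [noncommProd_of_eq_prod]

theorem Cl.of_dvd_heap {γ : Cl I} {c : S} (hc : c ∈ γ.1) : Heap.of I c ∣ γ.heap := by
  classical
  exact ⟨_, (Finset.mul_noncommProd_erase γ.1 hc (Heap.of I) _).symm⟩

theorem len_prod_of (l : List S) : len (l.map (Heap.of I)).prod = l.length := by
  induction l with
  | nil => exact len_one
  | cons c l ih => simp [len_mul, len_of, ih, add_comm]

theorem Cl.len_heap (γ : Cl I) : len γ.heap = γ.1.card := by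
  rw [γ.heap_eq_prod, len_prod_of, Finset.length_toList]

theorem occ_prod_of [DecidableEq S] (d : S) (l : List S) :
    occ d (l.map (Heap.of I)).prod = l.count d := by
  induction l with
  | nil => exact occ_one d
  | cons c l ih => by_cases h : c = d <;> simp [occ_mul, occ_of, ih, h, add_comm]

theorem Cl.occ_heap [DecidableEq S] (d : S) (γ : Cl I) :
    occ d γ.heap = if d ∈ γ.1 then 1 else 0 := by
  rw [γ.heap_eq_prod, occ_prod_of]
  split_ifs with h
  · exact List.count_eq_one_of_mem γ.1.nodup_toList (Finset.mem_toList.mpr h)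
  · exact List.count_eq_zero.mpr (mt Finset.mem_toList.mp h)

theorem Cl.heap_injective : Function.Injective (Cl.heap (I := I)) := by
  classical
  intro γ δ h
  refine Subtype.ext (Finset.ext fun d => ?_)
  have := congrArg (occ d) h
  rw [Cl.occ_heap, Cl.occ_heap] at this
  split_ifs at this with hγ hδ hδ <;> simp_all

theorem emptyCl_heap : (emptyCl I).heap = 1 := rfl

theorem move_emptyCl (γ : Cl I) : Move γ (emptyCl I) :=
  fun _ hb => absurd hb (Finset.notMem_empty _)

end Cliques

section PartialProducts

theorem ppSeq_zero (c : ℕ → Cl I) : ppSeq c 0 = 1 := rfl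

theorem ppSeq_succ (c : ℕ → Cl I) (n : ℕ) : ppSeq c (n + 1) = ppSeq c n * (c n).heap := by
  simp [ppSeq, List.range_succ]

theorem ppSeq_succ' (c : ℕ → Cl I) (n : ℕ) :
    ppSeq c (n + 1) = (c 0).heap * ppSeq (fun k => c (k + 1)) n := by
  simp [ppSeq, List.range_succ_eq_map, Function.comp_def]

theorem ppSeq_dvd_ppSeq (c : ℕ → Cl I) {n m : ℕ} (h : n ≤ m) : ppSeq c n ∣ ppSeq c m := by
  induction m, h using Nat.le_induction with
  | base => exact dvd_rfl
  | succ m _ ih => exact ih.trans (ppSeq_succ c m ▸ dvd_mul_right _ _)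

theorem ppSeq_stable {c : ℕ → Cl I} {N n : ℕ} (h : ∀ k, N ≤ k → c k = emptyCl I) (hn : N ≤ n) :
    ppSeq c n = ppSeq c N := by
  induction n, hn using Nat.le_induction with
  | base => rfl
  | succ n hn ih => rw [ppSeq_succ, h n hn, emptyCl_heap, mul_one, ih]

theorem ppSeq_truncate (c : ℕ → Cl I) (n m : ℕ) :
    ppSeq (fun k => if k < n then c k else emptyCl I) m = ppSeq c (min m n) := by
  induction m with
  | zero => simp [ppSeq_zero]
  | succ m ih =>
    rw [ppSeq_succ, ih]
    by_cases hmn : m < n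
    · rw [if_pos hmn, min_eq_left hmn.le, min_eq_left hmn, ppSeq_succ]
    · rw [if_neg hmn, emptyCl_heap, mul_one, min_eq_right (by omega), min_eq_right (by omega)]

theorem le_len_ppSeq (ξ : Bnd I) (n : ℕ) : n ≤ len (ppSeq ξ.1 n) := by
  induction n with
  | zero => exact Nat.zero_le _
  | succ n ih =>
    rw [ppSeq_succ, len_mul, Cl.len_heap]
    have := Finset.card_pos.mpr (ξ.2.1 n)
    omega

end PartialProducts

section CartierFoata

variable (I) in
def HasUniqueCF : Prop := ∀ x : Heap I, ∃! c : ℕ → Cl I, CFprop I c x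

theorem cf_spec (hCF : HasUniqueCF I) (x : Heap I) : CFprop I (cf I x) x := by
  rw [cf, dif_pos (hCF x).exists]
  exact (hCF x).exists.choose_spec

theorem cf_eq (hCF : HasUniqueCF I) {c : ℕ → Cl I} {x : Heap I} (h : CFprop I c x) :
    cf I x = c :=
  (hCF x).unique (cf_spec hCF x) h

theorem ppSeq_cf_dvd (hCF : HasUniqueCF I) (x : Heap I) (n : ℕ) : ppSeq (cf I x) n ∣ x := by
  obtain ⟨N, hN⟩ := (cf_spec hCF x).2
  rcases le_total n N with h | h
  · exact (ppSeq_dvd_ppSeq _ h).trans (dvd_of_eq (hN N le_rfl).1)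
  · rw [(hN n h).1]

theorem ppSeq_cf_of_forall_emptyCl (hCF : HasUniqueCF I) {x : Heap I} {N : ℕ}
    (h : ∀ k, N ≤ k → cf I x k = emptyCl I) : ppSeq (cf I x) N = x := by
  obtain ⟨M, hM⟩ := (cf_spec hCF x).2
  rw [← ppSeq_stable h (le_max_left N M), (hM _ (le_max_right N M)).1]

theorem cf_peel (hCF : HasUniqueCF I) (x : Heap I) :
    ∃ x₁, x = (cf I x 0).heap * x₁ ∧ cf I x₁ = fun k => cf I x (k + 1) := by
  obtain ⟨hmove, N, hN⟩ := cf_spec hCF x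
  have hempty : ∀ k, N ≤ k → cf I x (k + 1) = emptyCl I := fun k hk => (hN (k + 1) (by omega)).2
  refine ⟨ppSeq (fun k => cf I x (k + 1)) N, ?_, cf_eq hCF ⟨fun n => hmove (n + 1), N,
    fun n hn => ⟨ppSeq_stable hempty hn, hempty n hn⟩⟩⟩
  rw [← ppSeq_succ', (hN (N + 1) (by omega)).1]

theorem cf_ppSeq (hCF : HasUniqueCF I) {c : ℕ → Cl I} (hc : ∀ k, Move (c k) (c (k + 1)))
    (n : ℕ) : cf I (ppSeq c n) = fun k => if k < n then c k else emptyCl I := by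
  refine cf_eq hCF ⟨fun k => ?_, n, fun m hm => ⟨?_, if_neg (by omega)⟩⟩
  · dsimp only
    by_cases hk : k + 1 < n
    · rw [if_pos (by omega), if_pos hk]; exact hc k
    · rw [if_neg hk]; exact move_emptyCl _
  · rw [ppSeq_truncate, min_eq_right hm]

theorem of_dvd_iff_mem_cf (hCF : HasUniqueCF I) (hsymm : ∀ a b, I a b → I b a) {c : S}
    {x : Heap I} : Heap.of I c ∣ x ↔ c ∈ (cf I x 0).1 := by
  classical
  refine ⟨fun hcx => ?_, fun hc => ?_⟩
  · obtain ⟨N, hN⟩ := (cf_spec hCF x).2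
    replace hN : ∀ k, N ≤ k → cf I x k = emptyCl I := fun k hk => (hN k hk).2
    induction N generalizing x with
    | zero =>
      rw [← ppSeq_cf_of_forall_emptyCl hCF hN, ppSeq_zero] at hcx
      exact absurd hcx (Heap.not_of_dvd_one c)
    | succ N ih =>
      obtain ⟨x₁, hx, hx₁⟩ := cf_peel hCF x
      by_contra hc
      rw [hx, Cl.heap_eq_prod] at hcx
      obtain ⟨hind, hcx₁⟩ := dvd_of_dvd_prod_mul hcx fun d hd hdc =>
        hc (Heap.of_dvd_of_iff.mp hdc ▸ Finset.mem_toList.mp hd)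
      have hc₁ := ih hcx₁ fun k hk => by rw [hx₁]; exact hN (k + 1) (by omega)
      rw [hx₁] at hc₁
      obtain ⟨e, he, hec⟩ := (cf_spec hCF _).1 0 c hc₁
      rcases hind e (Finset.mem_toList.mpr he) c (by simp [occ_of]) with h | h
      exacts [hec h, hec (hsymm c e h)]
  · obtain ⟨x₁, hx, -⟩ := cf_peel hCF x
    exact (Cl.of_dvd_heap hc).trans ⟨x₁, hx⟩

/-- Write `u = γ * u₁` and `v = δ * v₁`. The minimal pieces `γ` of `u` form a subclique of `δ`;
a piece of `δ \ γ` cannot be minimal in `u₁`, as it would then depend on some piece of `γ`.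
So `u₁ ∣ v₁` and `u₁` commutes with `δ \ γ`. -/
theorem ppSeq_cf_dvd_ppSeq_cf (hCF : HasUniqueCF I) (hsymm : ∀ a b, I a b → I b a)
    {u v : Heap I} (h : u ∣ v) (n : ℕ) : ppSeq (cf I u) n ∣ ppSeq (cf I v) n := by
  classical
  induction n generalizing u v with
  | zero => exact dvd_rfl
  | succ n ih =>
    obtain ⟨u₁, hu, hu₁⟩ := cf_peel hCF u
    obtain ⟨v₁, hv, hv₁⟩ := cf_peel hCF v
    have hsub : (cf I u 0).1 ⊆ (cf I v 0).1 := fun c hc =>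
      (of_dvd_iff_mem_cf hCF hsymm).mp (((of_dvd_iff_mem_cf hCF hsymm).mpr hc).trans h)
    set l := ((cf I v 0).1 \ (cf I u 0).1).toList
    have hδ := Cl.heap_eq_heap_mul_prod hsub
    have hu₁v : u₁ ∣ (l.map (Heap.of I)).prod * v₁ := by
      obtain ⟨t, ht⟩ := h
      refine ⟨t, mul_left_cancel (a := (cf I u 0).heap) ?_⟩
      rw [← mul_assoc, ← mul_assoc, ← hδ, ← hu, ← hv, ht]
    have hnot : ∀ d ∈ l, ¬ Heap.of I d ∣ u₁ := by
      intro d hd hdu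
      obtain ⟨hdv, hdu'⟩ := Finset.mem_sdiff.mp (Finset.mem_toList.mp hd)
      have hd₁ := (of_dvd_iff_mem_cf hCF hsymm).mp hdu
      rw [hu₁] at hd₁
      obtain ⟨e, he, hed⟩ := (cf_spec hCF u).1 0 d hd₁
      exact hed ((cf I v 0).2 e (hsub he) d hdv (by rintro rfl; exact hdu' he))
    obtain ⟨hind, hu₁v₁⟩ := dvd_of_dvd_prod_mul hu₁v hnot
    have hcomm : Commute (l.map (Heap.of I)).prod (ppSeq (cf I u₁) n) := by
      refine Commute.list_prod_left _ _ fun y hy => ?_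
      obtain ⟨d, hd, rfl⟩ := List.mem_map.mp hy
      exact Heap.commute_of_left fun e he =>
        hind d hd e (he.trans_le (occ_le_occ_of_dvd e (ppSeq_cf_dvd hCF u₁ n)))
    rw [ppSeq_succ', ppSeq_succ', ← hu₁, ← hv₁, hδ, mul_assoc]
    exact mul_dvd_mul_left _ (hcomm.dvd_mul_of_dvd (ih hu₁v₁))

end CartierFoata

section Order

theorem mLe.dvd {ζ η : MB I} (h : mLe ζ η) (n : ℕ) : pp ζ n ∣ pp η n := h n

theorem mLe_refl (ζ : MB I) : mLe ζ ζ := fun _ => dvd_rfl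

theorem eventually_pp_inl_eq (hCF : HasUniqueCF I) (x : Heap I) :
    ∀ᶠ n in atTop, pp (.inl x : MB I) n = x :=
  let ⟨N, hN⟩ := (cf_spec hCF x).2
  eventually_atTop.mpr ⟨N, fun n hn => (hN n hn).1⟩

theorem dvd_of_mLe_inl_inl (hCF : HasUniqueCF I) {x y : Heap I} (h : mLe (.inl x) (.inl y)) :
    x ∣ y := by
  obtain ⟨n, hx, hy⟩ := ((eventually_pp_inl_eq hCF x).and (eventually_pp_inl_eq hCF y)).exists
  exact hx ▸ hy ▸ h.dvd n

theorem mLe_inl_inl_iff (hCF : HasUniqueCF I) (hsymm : ∀ a b, I a b → I b a) {x y : Heap I} :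
    mLe (.inl x) (.inl y) ↔ x ∣ y :=
  ⟨dvd_of_mLe_inl_inl hCF, ppSeq_cf_dvd_ppSeq_cf hCF hsymm⟩

theorem mLe_inl_inr_iff (hCF : HasUniqueCF I) (hsymm : ∀ a b, I a b → I b a) {x : Heap I}
    {ξ : Bnd I} : mLe (.inl x) (.inr ξ) ↔ ∃ n, x ∣ ppSeq ξ.1 n := by
  refine ⟨fun h => ?_, fun ⟨n, hn⟩ m => ?_⟩
  · obtain ⟨n, hx⟩ := (eventually_pp_inl_eq hCF x).exists
    exact ⟨n, hx ▸ h.dvd n⟩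
  · have := ppSeq_cf_dvd_ppSeq_cf hCF hsymm hn m
    rw [cf_ppSeq hCF ξ.2.2, ppSeq_truncate] at this
    exact this.trans (ppSeq_dvd_ppSeq _ (min_le_left m n))

theorem not_mLe_inr_inl (hCF : HasUniqueCF I) (ξ : Bnd I) (x : Heap I) :
    ¬ mLe (.inr ξ) (.inl x) := fun h => by
  have := len_le_len_of_dvd ((h.dvd (len x + 1)).trans (ppSeq_cf_dvd hCF x _))
  have := le_len_ppSeq ξ (len x + 1)
  simp only [pp, seqOf] at *
  omega

theorem mLe_antisymm (hCF : HasUniqueCF I) {ζ η : MB I} (h : mLe ζ η) (h' : mLe η ζ) : ζ = η := by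
  match ζ, η with
  | .inl x, .inl y =>
    rw [Heap.dvd_antisymm (dvd_of_mLe_inl_inl hCF h) (dvd_of_mLe_inl_inl hCF h')]
  | .inl x, .inr ξ => exact absurd h' (not_mLe_inr_inl hCF ξ x)
  | .inr ξ, .inl x => exact absurd h (not_mLe_inr_inl hCF ξ x)
  | .inr ξ, .inr ξ' =>
    have hpp n : ppSeq ξ.1 n = ppSeq ξ'.1 n := Heap.dvd_antisymm (h.dvd n) (h'.dvd n)
    refine congrArg Sum.inr (Subtype.ext (funext fun n => Cl.heap_injective ?_))
    refine mul_left_cancel (a := ppSeq ξ.1 n) ?_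
    rw [← ppSeq_succ, hpp, ppSeq_succ, hpp]

end Order

section FirstHittingTime

variable [DecidableEq S] {a : S} {ξ : Bnd I}

theorem IsHit.unique (hCF : HasUniqueCF I) {ζ ζ' : MB I} (h : IsHit a ξ ζ) (h' : IsHit a ξ ζ') :
    ζ = ζ' :=
  mLe_antisymm hCF (h'.2.2 ζ h.1 h.2.1) (h.2.2 ζ' h'.1 h'.2.1)

theorem isHit_hit (h : ∃ ζ, IsHit a ξ ζ) : IsHit a ξ (hit a ξ) := by
  rw [show hit a ξ = h.choose from dif_pos h]
  exact h.choose_spec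

theorem hit_eq (hCF : HasUniqueCF I) {ζ : MB I} (h : IsHit a ξ ζ) : hit a ξ = ζ :=
  (isHit_hit ⟨ζ, h⟩).unique hCF h

theorem mLe_hit (a : S) (ξ : Bnd I) : mLe (hit a ξ) (.inr ξ) := by
  by_cases h : ∃ ζ, IsHit a ξ ζ
  · exact (isHit_hit h).1
  · rw [show hit a ξ = .inr ξ from dif_neg h]
    exact mLe_refl _

theorem isHit_inr (h : ∀ x, mLe (.inl x) (.inr ξ) → occ a x = 0) : IsHit a ξ (.inr ξ) :=
  ⟨mLe_refl _, fun x hx hxa => absurd (h x hx) hxa.ne', fun _ hη _ => hη⟩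

theorem isHit_of_isFirstHit (hCF : HasUniqueCF I) (hsymm : ∀ a b, I a b → I b a) {n : ℕ}
    {x : Heap I} (h : IsFirstHit a (ppSeq ξ.1 n) x) : IsHit a ξ (.inl x) := by
  have hx : mLe (.inl x) (.inr ξ) := (mLe_inl_inr_iff hCF hsymm).mpr ⟨n, h.1⟩
  refine ⟨hx, fun y hy hya => ?_, fun η _ hη => hη x hx h.2.1⟩
  obtain ⟨m, hm⟩ := (mLe_inl_inr_iff hCF hsymm).mp hy
  have h' := h.of_dvd (h.1.trans (ppSeq_dvd_ppSeq _ (le_max_left n m)))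
  exact (mLe_inl_inl_iff hCF hsymm).mpr
    (h'.2.2 y (hm.trans (ppSeq_dvd_ppSeq _ (le_max_right n m))) hya)

theorem exists_isFirstHit_of_hit_eq_inl (hCF : HasUniqueCF I) (hsymm : ∀ a b, I a b → I b a)
    {x : Heap I} (h : hit a ξ = .inl x) : ∃ n, IsFirstHit a (ppSeq ξ.1 n) x := by
  by_cases hne : ∃ y, mLe (.inl y) (.inr ξ) ∧ 0 < occ a y
  · obtain ⟨y, hy, hya⟩ := hne
    obtain ⟨n, hyn⟩ := (mLe_inl_inr_iff hCF hsymm).mp hy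
    obtain ⟨x₀, hx₀⟩ := exists_isFirstHit (hya.trans_le (occ_le_occ_of_dvd a hyn))
    rw [hit_eq hCF (isHit_of_isFirstHit hCF hsymm hx₀)] at h
    exact ⟨n, Sum.inl.inj h ▸ hx₀⟩
  · push Not at hne
    rw [hit_eq hCF (isHit_inr fun y hy => Nat.eq_zero_of_le_zero (hne y hy))] at h
    exact absurd h Sum.inr_ne_inl

end FirstHittingTime

theorem firstHittingTime_isAST_general
    {S : Type} [DecidableEq S] (I : S → S → Prop)
    (hsymm : ∀ a b : S, I a b → I b a)
    (hCF : ∀ x : Heap I, ∃! c : ℕ → Cl I, CFprop I c x)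
 :
    ∀ a : S, IsAST (fun ξ : Bnd I => hit a ξ) := by
  intro a
  refine ⟨mLe_hit a, fun ξ ξ' x hx hle => ?_⟩
  obtain ⟨n, hn⟩ := exists_isFirstHit_of_hit_eq_inl hCF hsymm hx
  obtain ⟨m, hm⟩ := (mLe_inl_inr_iff hCF hsymm).mp hle
  rw [hx]
  exact hit_eq hCF (isHit_of_isFirstHit hCF hsymm (hn.of_dvd hm))

theorem firstHittingTime_isAST
    {S : Type} [Fintype S] [DecidableEq S] (I : S → S → Prop)
    (hsymm : ∀ a b : S, I a b → I b a)
    (hirr : ∀ a : S, ¬ I a a)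
    (hconn : ∀ a b : S, Relation.ReflTransGen (fun x y : S => x ≠ y ∧ ¬ I x y) a b)
    (hcard : 1 < Fintype.card S)
    (hCF : ∀ x : Heap I, ∃! c : ℕ → Cl I, CFprop I c x)
    (hhit : ∀ (a : S) (ξ : Bnd I), ∃ ζ : MB I, IsHit a ξ ζ)
 :
    ∀ a : S, IsAST (fun ξ : Bnd I => hit a ξ) :=
  firstHittingTime_isAST_general I hsymm hCF

end HeapPaper
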